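/- There exists a constant c₃ > 1, independent of u, n and k, with the following property: for every integer k ≥ 1, every cyclically reduced word u of length 2k beginning with b or b⁻¹ and ending with a, and every n ≥ 1, the number of reduced words of length n that are readable in the reduced u-barbell graph is at most c₃·2^k·2^{n/(4k+2)}. -/

import Mathlib

open scoped Classical

/-- Letters of the modular group alphabet: `0 = a`, `1 = b`, `2 = b⁻¹`. -/
abbrev ModLetter := Fin 3

/-- Words over the alphabet `A = {a, b, b⁻¹}`. -/
abbrev ModWord := List ModLetter

def La : ModLetter := 0
def Lb : ModLetter := 1
def Lbinv : ModLetter := 2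

/-- The letter-inverse map: `a ↦ a`, `b ↦ b⁻¹`, `b⁻¹ ↦ b`. -/
def invLetter (x : ModLetter) : ModLetter :=
  if x = Lb then Lbinv else if x = Lbinv then Lb else x

/-- Formal inverse of a word. -/
def wordInv (w : ModWord) : ModWord := (w.map invLetter).reverse

/-- The automorphism `η` applied letterwise: `a ↦ a`, `b ↦ b⁻¹`, `b⁻¹ ↦ b`. -/
def etaWord (w : ModWord) : ModWord := w.map invLetter

/-- `η^δ` for `δ ∈ {0,1}` (encoded as a `Bool`). -/
def etaPow (δ : Bool) (w : ModWord) : ModWord := if δ then etaWord w else w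

/-- A pair of adjacent letters is admissible iff exactly one of the two letters is `a`;
this excludes precisely the forbidden subwords `aa`, `bb⁻¹`, `b⁻¹b`, `bb`, `b⁻¹b⁻¹`. -/
def OkPair (x y : ModLetter) : Prop := (x = La ∧ y ≠ La) ∨ (x ≠ La ∧ y = La)

/-- A word is reduced iff it contains no forbidden length-two subword. -/
def Reduced (w : ModWord) : Prop := w.Chain' OkPair

/-- A word is cyclically reduced iff all of its cyclic permutations are reduced. -/
def CyclicallyReduced (w : ModWord) : Prop := ∀ k, Reduced (w.rotate k)

/-- `w` is a cyclic permutation of `v`. -/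
def IsCyclicPermOf (w v : ModWord) : Prop := ∃ k, w = v.rotate k

/-- The defining relators `a²`, `b³` of the modular group. -/
def modRels : Set (FreeGroup (Fin 2)) := {FreeGroup.of 0 ^ 2, FreeGroup.of 1 ^ 3}

/-- The modular group `M = ⟨a, b | a² = b³ = 1⟩`. -/
abbrev Mgrp := PresentedGroup modRels

/-- The generator `a` of `M`. -/
def ma : Mgrp := PresentedGroup.of 0

/-- The generator `b` of `M`. -/
def mb : Mgrp := PresentedGroup.of 1

def letterToM (x : ModLetter) : Mgrp :=
  if x = La then ma else if x = Lb then mb else mb⁻¹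

/-- The element of `M` represented by a word. -/
def wordToM (w : ModWord) : Mgrp := (w.map letterToM).prod

/-- The normal closure in `M` of a set of words. -/
def relSubgroup (S : Set ModWord) : Subgroup Mgrp :=
  Subgroup.normalClosure (wordToM '' S)

instance relSubgroup_normal (S : Set ModWord) : (relSubgroup S).Normal :=
  Subgroup.normalClosure_normal

/-- The quotient group `M/⟨⟨S⟩⟩`. -/
def Gquot (S : Set ModWord) : Type := Mgrp ⧸ relSubgroup S

instance (S : Set ModWord) : Group (Gquot S) :=
  inferInstanceAs (Group (Mgrp ⧸ relSubgroup S))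

/-- The quotient projection `M → M/⟨⟨S⟩⟩`. -/
def projG (S : Set ModWord) : Mgrp →* Gquot S := QuotientGroup.mk' (relSubgroup S)

/-- The image of the generator `a` in the quotient. -/
def aG (S : Set ModWord) : Gquot S := projG S ma

/-- The image of the generator `b` in the quotient. -/
def bG (S : Set ModWord) : Gquot S := projG S mb

/-- `u` is admissible as the bar of a reduced `u`-barbell graph: cyclically reduced,
of even positive length, beginning with `b` or `b⁻¹` and ending with `a`. -/
def BarbellWord (u : ModWord) : Prop :=
  CyclicallyReduced u ∧ 0 < u.length ∧ u.length % 2 = 0 ∧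
    (u.head? = some Lb ∨ u.head? = some Lbinv) ∧ u.getLast? = some La

/-- The block `a u b^ε u⁻¹`. -/
def barbellBlock (u : ModWord) (ε : Bool) : ModWord :=
  [La] ++ u ++ [if ε then Lb else Lbinv] ++ wordInv u

/-- A word `w` is readable in the reduced `u`-barbell graph iff it is a subword of some
concatenation `(a u b^{ε₁} u⁻¹) ⋯ (a u b^{ε_t} u⁻¹)`. -/
def BarbellReadable (u w : ModWord) : Prop :=
  ∃ εs : List Bool, w <:+: (εs.map (barbellBlock u)).flatten

/-- `w` is `θ`-readable. -/
def ThetaReadable (θ : ℝ) (w : ModWord) : Prop :=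
  ∃ (v u : ModWord) (k : ℕ),
    (v <:+: w.rotate k ∨ v <:+: (wordInv w).rotate k) ∧
    (w.length : ℝ) ≤ 2 * v.length ∧
    BarbellWord u ∧ (u.length : ℝ) ≤ θ * v.length ∧
    BarbellReadable u v

/-- A set of words is symmetrized if it is closed under cyclic permutations and inverses. -/
def Symmetrized (R : Set ModWord) : Prop :=
  ∀ w ∈ R, (∀ k, w.rotate k ∈ R) ∧ wordInv w ∈ R

/-- The `C'(λ)` small cancellation condition over `M`. -/
def Cprime (lam : ℝ) (R : Set ModWord) : Prop :=
  ∀ r ∈ R, ∀ r' ∈ R, r ≠ r' → ∀ u : ModWord, u ≠ [] → u <+: r → u <+: r' →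
    (u.length : ℝ) < lam * r.length

/-- The symmetrized closure `R(τ)` of a tuple of words. -/
def symClosure {m : ℕ} (τ : Fin m → ModWord) : Set ModWord :=
  {w | ∃ i k, w = (τ i).rotate k ∨ w = (wordInv (τ i)).rotate k}

/-- The genericity condition `Q_m(λ)` (for a tuple of cyclically reduced words). -/
def QCond {m : ℕ} (lam : ℝ) (τ : Fin m → ModWord) : Prop :=
  (∀ i, CyclicallyReduced (τ i)) ∧
  (∀ i, ¬ ThetaReadable (1/40) (τ i)) ∧
  Cprime lam (symClosure τ) ∧
  (∀ i, ¬ ∃ (s : Mgrp) (k : ℕ), 2 ≤ k ∧ wordToM (τ i) = s ^ k) ∧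
  (∀ i j, i ≠ j → ¬ IsCyclicPermOf (τ i) (τ j) ∧ ¬ IsCyclicPermOf (τ i) (wordInv (τ j))) ∧
  (∀ i j, ¬ ∃ (z : ModWord) (k k' : ℕ),
      z <:+: (etaWord (τ i)).rotate k ∧ (τ i).length < 3 * z.length ∧
      (z <:+: (τ j).rotate k' ∨ z <:+: (wordInv (τ j)).rotate k')) ∧
  (∀ i, ¬ IsCyclicPermOf (τ i) (wordInv (τ i))) ∧
  (∀ i, 1200 ≤ (τ i).length)

/-- The condition `U_m(λ) = Q_m(λ) ∩ T_m`. -/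
def UCond {m : ℕ} (lam : ℝ) (τ : Fin m → ModWord) : Prop :=
  QCond lam τ ∧ ∀ i j, (τ i).length = (τ j).length

/-- `|τ| = max_i |r_i|`. -/
def tupleLen {m : ℕ} (τ : Fin m → ModWord) : ℕ :=
  Finset.univ.sup fun i => (τ i).length

/-- `C^m`: tuples of cyclically reduced words. -/
def Cm (m : ℕ) : Set (Fin m → ModWord) := {τ | ∀ i, CyclicallyReduced (τ i)}

/-- `T_m`: tuples of cyclically reduced words, all of the same length. -/
def Tm (m : ℕ) : Set (Fin m → ModWord) :=
  {τ | (∀ i, CyclicallyReduced (τ i)) ∧ ∀ i j, (τ i).length = (τ j).length}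

/-- `γ(n,S)`: the number of tuples in `S` with `|τ| = n`. -/
noncomputable def gammaCount {m : ℕ} (S : Set (Fin m → ModWord)) (n : ℕ) : ℕ :=
  Nat.card {τ : Fin m → ModWord // τ ∈ S ∧ tupleLen τ = n}

/-- `ρ(n,S)`: the number of tuples in `S` with `|τ| ≤ n`. -/
noncomputable def rhoCount {m : ℕ} (S : Set (Fin m → ModWord)) (n : ℕ) : ℕ :=
  Nat.card {τ : Fin m → ModWord // τ ∈ S ∧ tupleLen τ ≤ n}

/-- `S` is exponentially generic in `X`. -/
def ExpGenericIn {m : ℕ} (S X : Set (Fin m → ModWord)) : Prop :=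
  ∃ K : ℝ, 0 < K ∧ ∃ q : ℝ, 0 < q ∧ q < 1 ∧
    ∀ n : ℕ, 1 ≤ n → 1 - (rhoCount S n : ℝ) / (rhoCount X n : ℝ) ≤ K * q ^ n

/-- The image of `ψ` is a finite cyclic group of order `1`, `2` or `3`. -/
def SmallCyclicImage {G H : Type*} [Group G] [Group H] (ψ : G →* H) : Prop :=
  ∃ x : H, ψ.range = Subgroup.zpowers x ∧
    (orderOf x = 1 ∨ orderOf x = 2 ∨ orderOf x = 3)

/-- A subgroup `H ≤ G` is malnormal: for `g ∉ H`, `gHg⁻¹ ∩ H = 1`. -/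
def Malnormal {G : Type*} [Group G] (H : Subgroup G) : Prop :=
  ∀ g : G, g ∉ H → ∀ x ∈ H, g * x * g⁻¹ ∈ H → x = 1

/-- The tuple obtained from `τ` by reordering by `π`, rotating entries by `k i`,
inverting the entries with `ε i = true`, and applying `η` iff `δ = true`. -/
def tupleTransform {m : ℕ} (π : Equiv.Perm (Fin m)) (k : Fin m → ℕ) (ε : Fin m → Bool)
    (δ : Bool) (τ : Fin m → ModWord) : Fin m → ModWord :=
  fun i => etaPow δ ((if ε i then wordInv (τ (π i)) else τ (π i)).rotate (k i))

/-- The parameters of a transformation are formally trivial on `τ`. -/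
def TrivialParams {m : ℕ} (π : Equiv.Perm (Fin m)) (k : Fin m → ℕ) (ε : Fin m → Bool)
    (δ : Bool) (τ : Fin m → ModWord) : Prop :=
  π = Equiv.refl (Fin m) ∧ (∀ i, k i % (τ i).length = 0) ∧ (∀ i, ε i = false) ∧ δ = false

/-- The condition `U'_m(λ)`. -/
def UprimeCond {m : ℕ} (lam : ℝ) (τ : Fin m → ModWord) : Prop :=
  UCond lam τ ∧
  ∀ π k ε δ, ¬ TrivialParams π k ε δ τ →
    (fun i => (τ i).take ⌊lam * (tupleLen τ : ℝ)⌋₊) ≠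
      (fun i => ((tupleTransform π k ε δ τ) i).take ⌊lam * (tupleLen τ : ℝ)⌋₊)

/-- The number of isomorphism classes of groups `G_τ` over all `m`-tuples `τ` of
cyclically reduced words of length exactly `n`. -/
noncomputable def Icount (m n : ℕ) : ℕ :=
  Nat.card (Quot (fun τ σ : {τ : Fin m → ModWord //
      (∀ i, CyclicallyReduced (τ i)) ∧ ∀ i, (τ i).length = n} =>
    Nonempty (Gquot (Set.range τ.1) ≃* Gquot (Set.range σ.1))))

/-- The absolute `T`-invariant `T₁(G)`: the minimal total relator length of a finite
presentation of `G`. -/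
noncomputable def T1inv (G : Type) [Group G] : ℕ :=
  sInf {ℓ : ℕ | ∃ (s t : ℕ) (rels : Fin t → FreeGroup (Fin s)),
    Nonempty (G ≃* PresentedGroup (Set.range rels)) ∧
    ℓ = ∑ i, ((rels i).toWord.length)}

/-!
A word readable in the `u`-barbell graph is an infix of a concatenation of blocks
`a u b^{±1} u⁻¹`, all of length `L = 4k + 2`. Such an infix of length `n` starts at an offset
`s < L` inside its first block and lies within the next `⌊n/L⌋ + 2` blocks, so it is determined
by `s` and the signs of those blocks: there are at most `L · 2^(⌊n/L⌋ + 2) ≤ 12 · 2^k · 2^(n/L)`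
of them.
-/

section BlockWords

variable {α β : Type*} (f : β → List α) {L : ℕ}

theorem length_flatten_map_of_length_eq (hf : ∀ b, (f b).length = L) (bs : List β) :
    (bs.map f).flatten.length = bs.length * L := by
  simp [List.length_flatten, Function.comp_def, hf]

theorem drop_flatten_map_of_length_eq (hf : ∀ b, (f b).length = L) (bs : List β) (q : ℕ) :
    (bs.map f).flatten.drop (q * L) = ((bs.drop q).map f).flatten := by
  induction bs generalizing q with
  | nil => simp
  | cons b bs ih =>
    cases q with
    | zero => simp
    | succ q =>
      rw [Nat.succ_mul, Nat.add_comm, ← List.drop_drop, List.map_cons, List.flatten_cons,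
        List.drop_left' (hf b), ih, List.drop_succ_cons]

theorem exists_prefix_drop_flatten_of_infix [Nonempty β] (hf : ∀ b, (f b).length = L)
    (hL : 0 < L) {w : List α} {bs : List β} (hw : w <:+: (bs.map f).flatten) {t : ℕ}
    (ht : w.length + L ≤ t * L) :
    ∃ s < L, ∃ cs : List β, cs.length = t ∧ w <+: (cs.map f).flatten.drop s := by
  obtain ⟨pre, post, hsplit⟩ := hw
  set q := pre.length / L
  set s := pre.length % L
  have hwG : w <+: ((bs.drop q).map f).flatten.drop s := by
    rw [← drop_flatten_map_of_length_eq f hf, List.drop_drop, Nat.div_add_mod', ← hsplit,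
      List.append_assoc, List.drop_left]
    exact List.prefix_append w post
  set ds := bs.drop q ++ List.replicate t (Classical.arbitrary β)
  have hGD : ((bs.drop q).map f).flatten.drop s <+: (ds.map f).flatten.drop s := by
    rw [List.map_append, List.flatten_append]
    exact (List.prefix_append _ _).drop s
  have hCD : ((ds.take t).map f).flatten.drop s <+: (ds.map f).flatten.drop s :=
    (((List.take_prefix t ds).map f).flatten).drop s
  have hs : s < L := Nat.mod_lt _ hL
  have hdt : (ds.take t).length = t := by simp [ds]
  refine ⟨s, hs, ds.take t, hdt, List.prefix_of_prefix_length_le (hwG.trans hGD) hCD ?_⟩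
  rw [List.length_drop, length_flatten_map_of_length_eq f hf, hdt]
  omega

theorem card_le_of_forall_infix_flatten [Fintype β] [Nonempty β] (hf : ∀ b, (f b).length = L)
    (hL : 0 < L) {P : List α → Prop} {n t : ℕ} (ht : n + L ≤ t * L)
    (hP : ∀ w, P w → w.length = n ∧ ∃ bs : List β, w <:+: (bs.map f).flatten) :
    Nat.card {w // P w} ≤ L * Fintype.card β ^ t := by
  have hdecode : ∀ w : {w // P w}, ∃ p : Fin L × List.Vector β t,
      (((p.2.1.map f).flatten).drop p.1).take n = w.1 := by
    rintro ⟨w, hw⟩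
    obtain ⟨hlen, bs, hinf⟩ := hP w hw
    obtain ⟨s, hs, cs, hcs, hpre⟩ :=
      exists_prefix_drop_flatten_of_infix f hf hL hinf (t := t) (by omega)
    exact ⟨(⟨s, hs⟩, ⟨cs, hcs⟩), by rw [← hlen, ← List.prefix_iff_eq_take.mp hpre]⟩
  choose encode hencode using hdecode
  have hinj : Function.Injective encode := fun w w' h =>
    Subtype.ext (by rw [← hencode w, ← hencode w', h])
  calc Nat.card {w // P w} ≤ Nat.card (Fin L × List.Vector β t) :=
        Nat.card_le_card_of_injective encode hinj
    _ = L * Fintype.card β ^ t := by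
        rw [Nat.card_eq_fintype_card, Fintype.card_prod, Fintype.card_fin, card_vector]

end BlockWords

theorem add_le_div_add_two_mul (n : ℕ) {L : ℕ} (hL : 0 < L) : n + L ≤ (n / L + 2) * L := by
  have := Nat.div_add_mod' n L
  have := Nat.mod_lt n hL
  rw [add_mul]; omega

theorem sixteen_mul_add_eight_le (k : ℕ) (hk : 1 ≤ k) : 16 * k + 8 ≤ 12 * 2 ^ k := by
  induction k, hk using Nat.le_induction with
  | base => norm_num
  | succ k hk ih =>
    have : 2 ≤ 2 ^ k := Nat.le_self_pow (by omega) 2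
    rw [pow_succ]; omega

theorem pow_natDiv_le_rpow {x : ℝ} (hx : 1 ≤ x) (n L : ℕ) :
    x ^ (n / L) ≤ x ^ ((n : ℝ) / L) := by
  rw [← Real.rpow_natCast]
  exact Real.rpow_le_rpow_of_exponent_le hx Nat.cast_div_le

theorem barbellBlock_length (u : ModWord) (ε : Bool) :
    (barbellBlock u ε).length = 2 * u.length + 2 := by
  simp only [barbellBlock, wordInv, List.length_append, List.length_reverse, List.length_map,
    List.length_singleton]
  ring

/-- There is a constant `c₃ > 1`, independent of `u`, `n` and `k`, such
that for every `k ≥ 1`, every admissible barbell word `u` of length `2k` and every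
`n ≥ 1`, the number of reduced words of length `n` readable in the reduced `u`-barbell
graph is at most `c₃·2^k·2^{n/(4k+2)}`. -/
theorem count_barbell_readable_words :
    ∃ c₃ : ℝ, 1 < c₃ ∧ ∀ k : ℕ, 1 ≤ k → ∀ u : ModWord, BarbellWord u → u.length = 2 * k →
      ∀ n : ℕ, 1 ≤ n →
        (Nat.card {w : ModWord // Reduced w ∧ w.length = n ∧ BarbellReadable u w} : ℝ) ≤
          c₃ * (2 : ℝ) ^ k * (2 : ℝ) ^ ((n : ℝ) / (4 * (k : ℝ) + 2)) := by
  refine ⟨12, by norm_num, fun k hk u _ hlen n _ => ?_⟩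
  have hblock : ∀ ε, (barbellBlock u ε).length = 4 * k + 2 := fun ε => by
    rw [barbellBlock_length, hlen]; ring
  have hcount := card_le_of_forall_infix_flatten (barbellBlock u) hblock (by omega)
    (add_le_div_add_two_mul n (by omega : 0 < 4 * k + 2))
    (P := fun w => Reduced w ∧ w.length = n ∧ BarbellReadable u w) (fun _ hw => hw.2)
  rw [Fintype.card_bool] at hcount
  have hconst : ((4 * (4 * k + 2) : ℕ) : ℝ) ≤ 12 * 2 ^ k := by
    exact_mod_cast (by linarith [sixteen_mul_add_eight_le k hk] : 4 * (4 * k + 2) ≤ 12 * 2 ^ k)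
  calc (Nat.card {w : ModWord // Reduced w ∧ w.length = n ∧ BarbellReadable u w} : ℝ)
      ≤ ((4 * k + 2) * 2 ^ (n / (4 * k + 2) + 2) : ℕ) := by exact_mod_cast hcount
    _ = ((4 * (4 * k + 2) : ℕ) : ℝ) * 2 ^ (n / (4 * k + 2)) := by push_cast; ring
    _ ≤ 12 * 2 ^ k * 2 ^ ((n : ℝ) / (4 * (k : ℝ) + 2)) := by
        gcongr
        exact_mod_cast pow_natDiv_le_rpow one_le_two n (4 * k + 2)
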